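/- Let N be a tree-child time consistent hybridization network and let i, j be distinct leaves. Then i and j are sibling tree leaves if, and only if, ℓ_N(i,j) = 1, ℓ_N(j,i) = 1, and the least common semi-strict ancestor [i,j] is a strict ancestor of both i and j. -/

import Mathlib

open Classical

/-- A walk (path) in a digraph: a nonempty list of vertices with consecutive arcs. -/
def IsWalk {V : Type} (E : V → V → Prop) (p : List V) : Prop := p ≠ [] ∧ p.Chain' E

/-- A path with origin `u` and end `v`. -/
def WalkFromTo {V : Type} (E : V → V → Prop) (u v : V) (p : List V) : Prop :=
  IsWalk E p ∧ p.head? = some u ∧ p.getLast? = some v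

/-- `v` is a descendant of `u` (possibly trivial path from `u` to `v`). -/
def Desc {V : Type} (E : V → V → Prop) (u v : V) : Prop := Relation.ReflTransGen E u v

/-- A root: a node with no incoming arcs. -/
def IsRootNode {V : Type} (E : V → V → Prop) (r : V) : Prop := ∀ u, ¬ E u r

/-- `u` is a strict ancestor of `v`: `v` is a descendant of `u` and every path
from a root to `v` contains `u`. -/
def StrictAnc {V : Type} (E : V → V → Prop) (u v : V) : Prop :=
  Desc E u v ∧ ∀ (r : V) (p : List V), IsRootNode E r → WalkFromTo E r v p → u ∈ p

/-- In-degree. -/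
noncomputable def indeg {V : Type} (E : V → V → Prop) (v : V) : ℕ := {u | E u v}.ncard
/-- Out-degree. -/
noncomputable def outdeg {V : Type} (E : V → V → Prop) (v : V) : ℕ := {w | E v w}.ncard

/-- Tree node: in-degree at most 1. -/
def IsTreeNode {V : Type} (E : V → V → Prop) (v : V) : Prop := indeg E v ≤ 1
/-- Hybrid node: in-degree at least 2. -/
def IsHybrid {V : Type} (E : V → V → Prop) (v : V) : Prop := 2 ≤ indeg E v
/-- Leaf: no outgoing arcs. -/
def IsLeaf {V : Type} (E : V → V → Prop) (v : V) : Prop := ∀ w, ¬ E v w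

/-- Acyclicity: no non-trivial path from a node to itself. -/
def Acyclic {V : Type} (E : V → V → Prop) : Prop := ∀ v, ¬ Relation.TransGen E v v

/-- A hybridization network: a rooted DAG whose single root has out-degree > 1. -/
structure IsHybNet {V : Type} (E : V → V → Prop) (r : V) : Prop where
  acyclic : Acyclic E
  isRoot : IsRootNode E r
  uniqueRoot : ∀ x, IsRootNode E x → x = r
  rootOut : 2 ≤ outdeg E r

/-- Tree-child condition: every internal node has a tree-node child. -/
def TreeChild {V : Type} (E : V → V → Prop) : Prop :=
  ∀ v, ¬ IsLeaf E v → ∃ w, E v w ∧ IsTreeNode E w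

/-- Time consistency: a temporal representation exists. -/
def TimeConsistent {V : Type} (E : V → V → Prop) : Prop :=
  ∃ τ : V → ℕ, ∀ u v, E u v → (IsTreeNode E v → τ u < τ v) ∧ (IsHybrid E v → τ u = τ v)

/-- The leaves are bijectively labeled by `S` via `leaf`. -/
def LabelsLeaves {V S : Type} (E : V → V → Prop) (leaf : S → V) : Prop :=
  Function.Injective leaf ∧ (∀ s, IsLeaf E (leaf s)) ∧ ∀ v, IsLeaf E v → ∃ s, leaf s = v

/-- Distance: length of a shortest path from `u` to `v`. -/
noncomputable def dist {V : Type} (E : V → V → Prop) (u v : V) : ℕ :=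
  sInf {n | ∃ p, WalkFromTo E u v p ∧ p.length = n + 1}

/-- Height: largest length of a path from `v` to a leaf. -/
noncomputable def height {V : Type} (E : V → V → Prop) (v : V) : ℕ :=
  sSup {n | ∃ p w, WalkFromTo E v w p ∧ IsLeaf E w ∧ p.length = n + 1}

/-- Common ancestors of `u` and `v` that are strict ancestors of at least one of them. -/
def CSAnc {V : Type} (E : V → V → Prop) (u v : V) : Set V :=
  {x | Desc E x u ∧ Desc E x v ∧ (StrictAnc E x u ∨ StrictAnc E x v)}

/-- `x` is a least common semi-strict ancestor of `u` and `v`. -/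
def IsLCSA {V : Type} (E : V → V → Prop) (u v x : V) : Prop :=
  x ∈ CSAnc E u v ∧ ∀ y ∈ CSAnc E u v, height E x ≤ height E y

/-- The least common semi-strict ancestor `[u,v]` (the root `r` witnesses nonemptiness). -/
noncomputable def lcsa {V : Type} (E : V → V → Prop) (r u v : V) : V :=
  @Classical.epsilon V ⟨r⟩ (IsLCSA E u v)

/-- `ℓ_N(u,v)`: the distance from `[u,v]` to `u`. -/
noncomputable def ell {V : Type} (E : V → V → Prop) (r u v : V) : ℕ :=
  dist E (lcsa E r u v) u

/-- `L_N(u,v) = ℓ_N(u,v) + ℓ_N(v,u)`: the LCSA-path length between `u` and `v`. -/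
noncomputable def pathLen {V : Type} (E : V → V → Prop) (r u v : V) : ℕ :=
  ell E r u v + ell E r v u

/-- `h_N(u,v)`: −1 if `[u,v]` is a strict ancestor of `u` only, 1 if of `v` only, 0 if of both. -/
noncomputable def hval {V : Type} (E : V → V → Prop) (r u v : V) : ℤ :=
  if StrictAnc E (lcsa E r u v) u then
    (if StrictAnc E (lcsa E r u v) v then 0 else -1)
  else 1

/-- Siblings: distinct nodes sharing a parent. -/
def Sibling {V : Type} (E : V → V → Prop) (u v : V) : Prop :=
  u ≠ v ∧ ∃ p, E p u ∧ E p v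

/-- A tree path: a non-trivial path whose end and intermediate nodes are tree nodes. -/
def TreePath {V : Type} (E : V → V → Prop) (p : List V) (u v : V) : Prop :=
  WalkFromTo E u v p ∧ 2 ≤ p.length ∧ ∀ w ∈ p.tail, IsTreeNode E w

/-- `v` is a tree descendant of `u`. -/
def TreeDesc {V : Type} (E : V → V → Prop) (u v : V) : Prop := ∃ p, TreePath E p u v

/-- Quasi-binary hybridization network. -/
def QuasiBinary {V : Type} (E : V → V → Prop) : Prop :=
  ∀ v : V, (indeg E v, outdeg E v) ∈ ({(0,2),(1,0),(1,2),(2,0),(2,1),(2,2)} : Set (ℕ × ℕ))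

/-- Fully resolved hybridization network node types. -/
def FullyResolvedHyb {V : Type} (E : V → V → Prop) : Prop :=
  ∀ v : V, (indeg E v, outdeg E v) ∈ ({(0,2),(1,0),(1,2),(2,0),(2,2)} : Set (ℕ × ℕ))

/-- Fully resolved phylogenetic network node types. -/
def FullyResolvedPhylo {V : Type} (E : V → V → Prop) : Prop :=
  ∀ v : V, (indeg E v, outdeg E v) ∈ ({(0,2),(1,0),(1,2),(2,1)} : Set (ℕ × ℕ))

/-- Phylogenetic network condition: every hybrid node has exactly one child, a tree node. -/
def PhyloNet {V : Type} (E : V → V → Prop) : Prop :=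
  ∀ v, IsHybrid E v → ∃ w, E v w ∧ IsTreeNode E w ∧ ∀ x, E v x → x = w


/-!
If `i` and `j` are tree leaves with common parent `p`, every path into `i` or `j` enters through
`p`. So `p` is a strict ancestor of both, and any common ancestor, differing from `i` or from `j`,
reaches that leaf through `p`; hence `p` has the least height and `[i,j] = p`.

Conversely, `ℓ(i,j) = ℓ(j,i) = 1` makes `x = [i,j]` a common parent of `i` and `j`. Suppose `i`
is hybrid. Among the nodes `w ≠ x` strictly below `x` (in the sense of `StrictAnc`) with
`τ w = τ x`, a set containing `i`, pick one, `m`, with no proper ancestor in the set. As `τ` never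
decreases along arcs and strictly increases into tree nodes, `m` is hybrid and so has a parent
`q ≠ x`. Every root path to `q` extends to `m`, so `q` is again strictly below `x`, and
`τ q = τ m`: a contradiction.
-/

section

variable {V : Type} {E : V → V → Prop}

lemma isWalk_iff {p : List V} : IsWalk E p ↔ p ≠ [] ∧ p.IsChain E := Iff.rfl

lemma not_walkFromTo_nil {u v : V} : ¬ WalkFromTo E u v [] :=
  fun h => h.1.1 rfl

lemma walkFromTo_singleton {u v a : V} : WalkFromTo E u v [a] ↔ a = u ∧ a = v := by
  simp [WalkFromTo, isWalk_iff, eq_comm]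

lemma walkFromTo_cons_cons {u v a b : V} {l : List V} :
    WalkFromTo E u v (a :: b :: l) ↔ a = u ∧ E u b ∧ WalkFromTo E b v (b :: l) := by
  simp only [WalkFromTo, isWalk_iff, List.isChain_cons_cons, List.head?_cons,
    Option.some.injEq, List.getLast?_cons_cons, ne_eq, reduceCtorEq, not_false_eq_true,
    true_and]
  constructor
  · rintro ⟨⟨hab, hl⟩, rfl, hv⟩
    exact ⟨rfl, hab, hl, hv⟩
  · rintro ⟨rfl, hab, hl, hv⟩
    exact ⟨⟨hab, hl⟩, rfl, hv⟩

lemma WalkFromTo.cons {u v w : V} {p : List V} (h : WalkFromTo E v w p) (huv : E u v) :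
    WalkFromTo E u w (u :: p) := by
  obtain _ | ⟨a, l⟩ := p
  · exact absurd h not_walkFromTo_nil
  · obtain rfl : a = v := by simpa using h.2.1
    exact walkFromTo_cons_cons.mpr ⟨rfl, huv, h⟩

lemma WalkFromTo.concat {u v w : V} {p : List V} (h : WalkFromTo E u v p) (hvw : E v w) :
    WalkFromTo E u w (p ++ [w]) := by
  induction p generalizing u with
  | nil => exact absurd h not_walkFromTo_nil
  | cons a l ih =>
    obtain _ | ⟨b, l⟩ := l
    · obtain ⟨rfl, rfl⟩ := walkFromTo_singleton.mp h
      exact walkFromTo_cons_cons.mpr ⟨rfl, hvw, walkFromTo_singleton.mpr ⟨rfl, rfl⟩⟩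
    · obtain ⟨rfl, hab, hl⟩ := walkFromTo_cons_cons.mp h
      exact walkFromTo_cons_cons.mpr ⟨rfl, hab, ih hl⟩

lemma WalkFromTo.desc_of_mem {u v x : V} {p : List V} (h : WalkFromTo E u v p) (hx : x ∈ p) :
    Desc E x v := by
  obtain ⟨⟨-, hchain⟩, -, hlast⟩ := h
  refine List.IsChain.backwards_induction (Desc E · v) p hchain
    (fun _ _ hxy hy => Relation.ReflTransGen.head hxy hy) (fun hne => ?_) x hx
  rw [List.getLast?_eq_some_getLast hne] at hlast
  rw [Option.some.inj hlast]
  exact Relation.ReflTransGen.refl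

lemma WalkFromTo.exists_parent_mem {u v : V} {p : List V} (h : WalkFromTo E u v p)
    (huv : u ≠ v) : ∃ q ∈ p, E q v := by
  induction p generalizing u with
  | nil => exact absurd h not_walkFromTo_nil
  | cons a l ih =>
    obtain _ | ⟨b, l⟩ := l
    · obtain ⟨rfl, rfl⟩ := walkFromTo_singleton.mp h
      exact absurd rfl huv
    · obtain ⟨rfl, hab, hl⟩ := walkFromTo_cons_cons.mp h
      by_cases hbv : b = v
      · exact ⟨a, List.mem_cons_self, hbv ▸ hab⟩
      · obtain ⟨q, hq, hqv⟩ := ih hl hbv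
        exact ⟨q, List.mem_cons_of_mem a hq, hqv⟩

section Acyclic

lemma Acyclic.ne_of_edge (hac : Acyclic E) {u v : V} (h : E u v) : u ≠ v := by
  rintro rfl
  exact hac u (.single h)

lemma Acyclic.length_le_card [Fintype V] (hac : Acyclic E) {u v : V} {p : List V}
    (h : WalkFromTo E u v p) : p.length ≤ Fintype.card V :=
  have : Std.Irrefl (Relation.TransGen E) := ⟨hac⟩
  ((h.1.2.imp fun _ _ => Relation.TransGen.single).pairwise.nodup).length_le_card

variable [Finite V]

lemma Acyclic.wellFounded (hac : Acyclic E) : WellFounded (Relation.TransGen E) :=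
  have : Std.Irrefl (Relation.TransGen E) := ⟨hac⟩
  Finite.wellFounded_of_trans_of_irrefl _

lemma Acyclic.wellFounded_swap (hac : Acyclic E) :
    WellFounded (Function.swap (Relation.TransGen E)) :=
  have : Std.Irrefl (Function.swap (Relation.TransGen E)) := ⟨hac⟩
  Finite.wellFounded_of_trans_of_irrefl _

lemma Acyclic.exists_root_walkFromTo (hac : Acyclic E) (v : V) :
    ∃ r p, IsRootNode E r ∧ WalkFromTo E r v p := by
  induction v using hac.wellFounded.induction with
  | _ v ih =>
    by_cases h : ∃ u, E u v
    · obtain ⟨u, hu⟩ := h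
      obtain ⟨r, p, hr, hp⟩ := ih u (.single hu)
      exact ⟨r, p ++ [v], hr, hp.concat hu⟩
    · exact ⟨v, [v], fun u hu => h ⟨u, hu⟩, walkFromTo_singleton.mpr ⟨rfl, rfl⟩⟩

lemma Acyclic.exists_walkFromTo_leaf (hac : Acyclic E) (v : V) :
    ∃ w p, WalkFromTo E v w p ∧ IsLeaf E w := by
  induction v using hac.wellFounded_swap.induction with
  | _ v ih =>
    by_cases h : ∃ w, E v w
    · obtain ⟨w, hw⟩ := h
      obtain ⟨l, p, hp, hl⟩ := ih w (.single hw)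
      exact ⟨l, v :: p, hp.cons hw, hl⟩
    · exact ⟨v, [v], walkFromTo_singleton.mpr ⟨rfl, rfl⟩, fun w hw => h ⟨w, hw⟩⟩

end Acyclic

section Height

variable [Fintype V]

lemma Acyclic.bddAbove_height_set (hac : Acyclic E) (v : V) :
    BddAbove {n | ∃ p w, WalkFromTo E v w p ∧ IsLeaf E w ∧ p.length = n + 1} := by
  refine ⟨Fintype.card V, ?_⟩
  rintro n ⟨p, w, hp, -, hlen⟩
  have := hac.length_le_card hp
  omega

lemma Acyclic.exists_walkFromTo_leaf_length_eq_height (hac : Acyclic E) (v : V) :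
    ∃ p w, WalkFromTo E v w p ∧ IsLeaf E w ∧ p.length = height E v + 1 := by
  refine Nat.sSup_mem ?_ (hac.bddAbove_height_set v)
  obtain ⟨w, p, hp, hw⟩ := hac.exists_walkFromTo_leaf v
  have : p.length ≠ 0 := List.length_eq_zero_iff.not.mpr hp.1.1
  exact ⟨p.length - 1, p, w, hp, hw, by omega⟩

lemma Acyclic.height_lt_of_edge (hac : Acyclic E) {y z : V} (h : E y z) :
    height E z < height E y := by
  obtain ⟨p, w, hp, hw, hlen⟩ := hac.exists_walkFromTo_leaf_length_eq_height z
  exact le_csSup (hac.bddAbove_height_set y) ⟨y :: p, w, hp.cons h, hw, by simp [hlen]⟩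

lemma Acyclic.height_lt_of_transGen (hac : Acyclic E) {y z : V}
    (h : Relation.TransGen E y z) : height E z < height E y := by
  induction h with
  | single h => exact hac.height_lt_of_edge h
  | tail _ h ih => exact (hac.height_lt_of_edge h).trans ih

lemma Acyclic.height_le_of_desc (hac : Acyclic E) {y z : V} (h : Desc E y z) :
    height E z ≤ height E y := by
  obtain rfl | h := Relation.reflTransGen_iff_eq_or_transGen.mp h
  · exact le_rfl
  · exact (hac.height_lt_of_transGen h).le

end Height

lemma dist_eq_one_of_edge {u v : V} (h : E u v) (hne : u ≠ v) : _root_.dist E u v = 1 := by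
  have h1 : 1 ∈ {n | ∃ p, WalkFromTo E u v p ∧ p.length = n + 1} :=
    ⟨[u, v], walkFromTo_cons_cons.mpr ⟨rfl, h, walkFromTo_singleton.mpr ⟨rfl, rfl⟩⟩, rfl⟩
  have h0 : 0 ∉ {n | ∃ p, WalkFromTo E u v p ∧ p.length = n + 1} := by
    rintro ⟨p, hp, hlen⟩
    obtain ⟨a, rfl⟩ := List.length_eq_one_iff.mp hlen
    obtain ⟨rfl, rfl⟩ := walkFromTo_singleton.mp hp
    exact hne rfl
  have hle := Nat.sInf_le h1
  have hpos : _root_.dist E u v ≠ 0 := by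
    rw [_root_.dist, Ne, Nat.sInf_eq_zero, not_or]
    exact ⟨h0, Set.nonempty_iff_ne_empty.mp ⟨1, h1⟩⟩
  rw [_root_.dist] at hpos ⊢
  omega

lemma edge_of_dist_eq_one {u v : V} (h : _root_.dist E u v = 1) : E u v := by
  have hne : {n | ∃ p, WalkFromTo E u v p ∧ p.length = n + 1}.Nonempty := by
    refine Set.nonempty_iff_ne_empty.mpr fun hempty => ?_
    rw [_root_.dist, hempty, Nat.sInf_empty] at h
    exact zero_ne_one h
  have hmem := Nat.sInf_mem hne
  rw [_root_.dist] at h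
  rw [h] at hmem
  obtain ⟨p, hp, hlen⟩ := hmem
  obtain ⟨a, b, rfl⟩ := List.length_eq_two.mp hlen
  obtain ⟨rfl, huv, hb⟩ := walkFromTo_cons_cons.mp hp
  obtain ⟨-, rfl⟩ := walkFromTo_singleton.mp hb
  exact huv

lemma lcsa_comm (r u v : V) : lcsa E r u v = lcsa E r v u := by
  have : CSAnc E u v = CSAnc E v u := by
    ext x
    exact ⟨fun ⟨hu, hv, h⟩ => ⟨hv, hu, h.symm⟩, fun ⟨hv, hu, h⟩ => ⟨hu, hv, h.symm⟩⟩
  unfold lcsa IsLCSA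
  rw [this]

lemma Acyclic.lcsa_eq_of_forall_desc [Fintype V] (hac : Acyclic E) {r u v x : V}
    (hx : x ∈ CSAnc E u v) (hdesc : ∀ y, Desc E y u → Desc E y v → Desc E y x) :
    lcsa E r u v = x := by
  have hxL : IsLCSA E u v x :=
    ⟨hx, fun y hy => hac.height_le_of_desc (hdesc y hy.1 hy.2.1)⟩
  obtain ⟨⟨hLu, hLv, -⟩, hLmin⟩ : IsLCSA E u v (lcsa E r u v) := Classical.epsilon_spec ⟨x, hxL⟩
  by_contra hne
  have hlt := hac.height_lt_of_transGen
    ((Relation.reflTransGen_iff_eq_or_transGen.mp (hdesc _ hLu hLv)).resolve_left (Ne.symm hne))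
  have := hLmin x hx
  omega

section TreeNode

variable [Finite V] {p v : V}

lemma IsTreeNode.eq_of_edge (hv : IsTreeNode E v) {q : V} (hp : E p v) (hq : E q v) : p = q :=
  (Set.ncard_le_one (Set.toFinite _)).mp hv p hp q hq

lemma IsTreeNode.desc_parent_of_desc (hv : IsTreeNode E v) (hpv : E p v) {y : V} (hyv : Desc E y v)
    (hne : y ≠ v) : Desc E y p := by
  obtain rfl | ⟨c, hyc, hcv⟩ := Relation.ReflTransGen.cases_tail hyv
  · exact absurd rfl hne
  · rwa [hv.eq_of_edge hcv hpv] at hyc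

lemma IsTreeNode.strictAnc_of_edge (hv : IsTreeNode E v) (hpv : E p v) : StrictAnc E p v := by
  refine ⟨.single hpv, fun r q hr hq => ?_⟩
  obtain ⟨c, hc, hcv⟩ := hq.exists_parent_mem fun h => hr p (h ▸ hpv)
  rwa [hv.eq_of_edge hcv hpv] at hc

end TreeNode

lemma StrictAnc.of_edge [Finite V] (hac : Acyclic E) {x u v : V} (hx : StrictAnc E x v)
    (huv : E u v) (hxv : x ≠ v) : StrictAnc E x u := by
  have hmem : ∀ r p, IsRootNode E r → WalkFromTo E r u p → x ∈ p := fun r p hr hp => by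
    simpa [hxv] using hx.2 r (p ++ [v]) hr (hp.concat huv)
  obtain ⟨r, p, hr, hp⟩ := hac.exists_root_walkFromTo u
  exact ⟨hp.desc_of_mem (hmem r p hr hp), hmem⟩

lemma isHybrid_of_not_isTreeNode {v : V} (h : ¬ IsTreeNode E v) : IsHybrid E v :=
  not_le.mp h

def IsTemporalRepresentation (E : V → V → Prop) (τ : V → ℕ) : Prop :=
  ∀ u v, E u v → (IsTreeNode E v → τ u < τ v) ∧ (IsHybrid E v → τ u = τ v)

namespace IsTemporalRepresentation

variable {τ : V → ℕ}

lemma le_of_edge (hτ : IsTemporalRepresentation E τ) {u v : V} (h : E u v) : τ u ≤ τ v := by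
  by_cases hv : IsTreeNode E v
  · exact ((hτ u v h).1 hv).le
  · exact ((hτ u v h).2 (isHybrid_of_not_isTreeNode hv)).le

lemma le_of_desc (hτ : IsTemporalRepresentation E τ) {u v : V} (h : Desc E u v) : τ u ≤ τ v := by
  induction h with
  | refl => exact le_rfl
  | tail _ h ih => exact ih.trans (hτ.le_of_edge h)

lemma isHybrid_of_transGen (hτ : IsTemporalRepresentation E τ) {u v : V}
    (h : Relation.TransGen E u v) (heq : τ v = τ u) :
    IsHybrid E v := by
  obtain ⟨b, hub, hbv⟩ := Relation.TransGen.tail'_iff.mp h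
  refine isHybrid_of_not_isTreeNode fun hv => ?_
  have := hτ.le_of_desc hub
  have := (hτ b v hbv).1 hv
  omega

end IsTemporalRepresentation

lemma isTreeNode_of_strictAnc_of_edge [Finite V] (hac : Acyclic E) {τ : V → ℕ}
    (hτ : IsTemporalRepresentation E τ) {x i : V} (hxi : E x i) (hx : StrictAnc E x i) :
    IsTreeNode E i := by
  by_contra hi
  obtain ⟨m, ⟨hxm, hne, hτm⟩, hmin⟩ := hac.wellFounded.has_min
    {w | StrictAnc E x w ∧ x ≠ w ∧ τ w = τ x}
    ⟨i, hx, hac.ne_of_edge hxi, ((hτ x i hxi).2 (isHybrid_of_not_isTreeNode hi)).symm⟩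
  have hm : IsHybrid E m := hτ.isHybrid_of_transGen
    ((Relation.reflTransGen_iff_eq_or_transGen.mp hxm.1).resolve_left (Ne.symm hne)) hτm
  obtain ⟨q, hqm, hqx⟩ := Set.exists_ne_of_one_lt_ncard hm x
  exact hmin q ⟨hxm.of_edge hac hqm hne, Ne.symm hqx, ((hτ q m hqm).2 hm).trans hτm⟩ (.single hqm)

end

theorem stmt14_general {V : Type} [Fintype V] (E : V → V → Prop) (r : V)
    (hnet : IsHybNet E r) (hti : TimeConsistent E)
    (i j : V) (hij : i ≠ j) :
    (IsTreeNode E i ∧ IsTreeNode E j ∧ Sibling E i j) ↔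
      (ell E r i j = 1 ∧ ell E r j i = 1 ∧
        StrictAnc E (lcsa E r i j) i ∧ StrictAnc E (lcsa E r i j) j) := by
  have hac := hnet.acyclic
  constructor
  · rintro ⟨hi, hj, -, p, hpi, hpj⟩
    have hsi := hi.strictAnc_of_edge hpi
    have hsj := hj.strictAnc_of_edge hpj
    have hp : lcsa E r i j = p := by
      refine hac.lcsa_eq_of_forall_desc ⟨.single hpi, .single hpj, .inl hsi⟩ fun y hyi hyj => ?_
      by_cases hy : y = i
      · exact hj.desc_parent_of_desc hpj hyj (hy ▸ hij)
      · exact hi.desc_parent_of_desc hpi hyi hy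
    refine ⟨?_, ?_, hp ▸ hsi, hp ▸ hsj⟩
    · rw [ell, hp, dist_eq_one_of_edge hpi (hac.ne_of_edge hpi)]
    · rw [ell, lcsa_comm, hp, dist_eq_one_of_edge hpj (hac.ne_of_edge hpj)]
  · rintro ⟨hi, hj, hsi, hsj⟩
    obtain ⟨τ, hτ⟩ := hti
    have hxi : E (lcsa E r i j) i := edge_of_dist_eq_one hi
    have hxj : E (lcsa E r i j) j := edge_of_dist_eq_one (lcsa_comm (E := E) r i j ▸ hj)
    exact ⟨isTreeNode_of_strictAnc_of_edge hac hτ hxi hsi,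
      isTreeNode_of_strictAnc_of_edge hac hτ hxj hsj, hij, _, hxi, hxj⟩

/-- In a TCTC hybridization network, distinct leaves `i, j` are sibling
tree leaves iff `ℓ_N(i,j) = 1`, `ℓ_N(j,i) = 1`, and `[i,j]` is a strict ancestor of both. -/
theorem stmt14 {V : Type} [Fintype V] (E : V → V → Prop) (r : V)
    (hnet : IsHybNet E r) (htc : TreeChild E) (hti : TimeConsistent E)
    (i j : V) (hi : IsLeaf E i) (hj : IsLeaf E j) (hij : i ≠ j) :
    (IsTreeNode E i ∧ IsTreeNode E j ∧ Sibling E i j) ↔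
      (ell E r i j = 1 ∧ ell E r j i = 1 ∧
        StrictAnc E (lcsa E r i j) i ∧ StrictAnc E (lcsa E r i j) j) :=
  stmt14_general E r hnet hti i j hij
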